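/- arXiv:2307.09103 — 3 statements merged into one kernel-verified Lean document; each statement's English description precedes it below -/
import Mathlib

section
/- Under the Schatz-type smallness condition on the adjoint approximation quantity η (namely β C_b² η² ≤ α/2, ensuring the quasi-optimal error bound for any Galerkin solution), the finite-dimensional Galerkin problem a(u_h, v_h) = ℓ(v_h) for all v_h ∈ V_h has a unique solution u_h ∈ V_h for every antilinear continuous functional ℓ, provided the continuous problem a(u,v) = ℓ(v) for all v ∈ X is uniquely solvable. -/
open ComplexConjugate

/-!
Testing the continuous problem against `v ↦ ⟪v, g⟫` yields a solution operator `U` with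
`a (U g) v = ⟪v, g⟫`. It is bounded below, continuous by the closed graph theorem, and satisfies
the Gårding inequality `α ‖U g‖² - β ‖J (U g)‖² ≤ re ⟪U g, g⟫`. For `g ⊥ Vh`, the Aubin–Nitsche
duality argument gives `‖J (U g)‖ ≤ η ‖g‖`, so under the smallness condition `U + c P_Vh` is
coercive for a suitable `c`. The injective operator `U` is then a finite-rank perturbation of an
invertible one, hence invertible by the Fredholm alternative. So `a u v = ⟪v, U⁻¹ u⟫` for every
`u`. In particular `a` is antilinear in `v`, and with `ℓ = ⟪·, r⟫` the Galerkin problem becomes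
the square system `P_Vh (U⁻¹ uh) = P_Vh r` on `Vh`. By Gårding and Aubin–Nitsche (Schatz's argument), the
homogeneous system has only the trivial solution.
-/

theorem ContinuousLinearMap.isUnit_of_injective_of_isCompactOperator_sub
    {𝕜 E : Type*} [NontriviallyNormedField 𝕜] [NormedAddCommGroup E] [NormedSpace 𝕜 E]
    [CompleteSpace E] {S T : E →L[𝕜] E} (hS : IsUnit S) (hST : IsCompactOperator (S - T))
    (hT : Function.Injective T) : IsUnit T := by
  obtain ⟨S, rfl⟩ := hS
  set K : E →L[𝕜] E := ↑S⁻¹ * (↑S - T)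
  have hTK : T = S * (1 - K) := by simp [K, mul_sub, ← mul_assoc]
  have hK : ¬ Module.End.HasEigenvalue (K : Module.End 𝕜 E) 1 := by
    intro h
    obtain ⟨x, hx, hx0⟩ := h.exists_hasEigenvector
    have hKx : K x = x := by simpa using Module.End.mem_eigenspace_iff.1 hx
    exact hx0 (hT (by rw [hTK]; simp [hKx]))
  have h1 := ((hST.clm_comp _).hasEigenvalue_or_mem_resolventSet one_ne_zero).resolve_left hK
  rw [spectrum.mem_resolventSet_iff, map_one] at h1
  rw [hTK]
  exact S.isUnit.mul h1

section Form

variable {X H : Type*} [NormedAddCommGroup X] [InnerProductSpace ℂ X]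
  [NormedAddCommGroup H] [InnerProductSpace ℂ H] {a : X → X → ℂ} {Cb α β η : ℝ}

theorem exists_linearMap_forall_form_eq_inner_iff
    (hadd : ∀ w w' v : X, a (w + w') v = a w v + a w' v)
    (hsmul : ∀ (c : ℂ) (w v : X), a (c • w) v = c * a w v)
    (hcont : ∀ ℓ : X →SL[starRingEnd ℂ] ℂ, ∃! u : X, ∀ v : X, a u v = ℓ v) :
    ∃ U : X →ₗ[ℂ] X, ∀ g u : X, (∀ v, a u v = inner ℂ v g) ↔ u = U g := by
  choose U hU huniq using fun g : X => hcont (innerSLFlip ℂ g)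
  simp only [innerSLFlip_apply_apply] at hU huniq
  let U' : X →ₗ[ℂ] X :=
    { toFun := U
      map_add' := fun g g' => (huniq _ _ fun v => by rw [hadd, hU, hU, inner_add_right]).symm
      map_smul' := fun c g => (huniq _ _ fun v => by
        rw [hsmul, hU, inner_smul_right, RingHom.id_apply]).symm }
  exact ⟨U', fun g u => ⟨huniq g u, fun h => h ▸ hU g⟩⟩

theorem norm_le_of_forall_form_eq_inner (hCb : 0 ≤ Cb)
    (hbound : ∀ w v : X, ‖a w v‖ ≤ Cb * ‖w‖ * ‖v‖) {u g : X}
    (hu : ∀ v, a u v = inner ℂ v g) : ‖g‖ ≤ Cb * ‖u‖ := by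
  have h : ‖g‖ ^ 2 ≤ Cb * ‖u‖ * ‖g‖ := by
    simpa [hu, inner_self_eq_norm_sq_to_K] using hbound u g
  nlinarith [norm_nonneg g, norm_nonneg u, mul_nonneg hCb (norm_nonneg u)]

theorem continuous_form_left
    (hadd : ∀ w w' v : X, a (w + w') v = a w v + a w' v)
    (hsmul : ∀ (c : ℂ) (w v : X), a (c • w) v = c * a w v)
    (hbound : ∀ w v : X, ‖a w v‖ ≤ Cb * ‖w‖ * ‖v‖) (v : X) :
    Continuous fun u => a u v :=
  continuous_of_linear_of_bound (fun u u' => hadd u u' v) (fun c u => hsmul c u v)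
    (C := Cb * ‖v‖) fun u => (hbound u v).trans_eq (mul_right_comm _ _ _)

theorem LinearMap.continuous_of_forall_form_eq_inner_iff [CompleteSpace X]
    (hadd : ∀ w w' v : X, a (w + w') v = a w v + a w' v)
    (hsmul : ∀ (c : ℂ) (w v : X), a (c • w) v = c * a w v)
    (hbound : ∀ w v : X, ‖a w v‖ ≤ Cb * ‖w‖ * ‖v‖) {U : X →ₗ[ℂ] X}
    (hU : ∀ g u : X, (∀ v, a u v = inner ℂ v g) ↔ u = U g) : Continuous U :=
  U.continuous_of_seq_closed_graph fun s g u hs hUs => (hU g u).1 fun v =>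
    tendsto_nhds_unique (((continuous_form_left hadd hsmul hbound v).tendsto u).comp hUs) <| by
      simpa only [Function.comp_def, (hU _ _).2 rfl] using tendsto_const_nhds.inner hs

theorem norm_apply_le_of_forall_form_eq_inner_of_mem_orthogonal (J : X →L[ℂ] H)
    (Vh : Submodule ℂ X) (w : H → X)
    (hadjoint : ∀ (f : H) (v : X), conj (a v (w f)) = inner ℂ (J v) f) (hη : 0 ≤ η)
    (happrox : ∀ f : H, ∀ ε > 0, ∃ vh ∈ Vh, ‖w f - vh‖ ≤ (η + ε) * ‖f‖) {u g : X}
    (hu : ∀ v, a u v = inner ℂ v g) (hg : g ∈ Vhᗮ) : ‖J u‖ ≤ η * ‖g‖ := by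
  refine le_mul_of_forall_lt₀ fun η' hη' r hr => ?_
  obtain ⟨vh, hvh, hclose⟩ := happrox (J u) (η' - η) (sub_pos.2 hη')
  rw [add_sub_cancel] at hclose
  have key : ‖J u‖ ^ 2 ≤ ‖w (J u) - vh‖ * ‖g‖ := calc
    ‖J u‖ ^ 2 = ‖inner ℂ (w (J u) - vh) g‖ := by
      rw [inner_sub_left, Submodule.inner_right_of_mem_orthogonal hvh hg, sub_zero, ← hu,
        ← RCLike.norm_conj, hadjoint, inner_self_eq_norm_sq_to_K]
      simp
    _ ≤ _ := norm_inner_le_norm _ _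
  have hη'r : 0 ≤ η' * r := mul_nonneg (hη.trans hη'.le) ((norm_nonneg g).trans hr.le)
  have hJu : ‖J u‖ ^ 2 ≤ η' * r * ‖J u‖ := by
    have := mul_le_mul hclose hr.le (norm_nonneg g)
      (mul_nonneg (hη.trans hη'.le) (norm_nonneg _))
    nlinarith
  nlinarith [norm_nonneg (J u)]

theorem le_re_inner_add_smul_starProjection (J : X →L[ℂ] H) (Vh : Submodule ℂ X)
    [Vh.HasOrthogonalProjection] (w : H → X) (hCb : 0 < Cb) (hα : 0 ≤ α) (hβ : 0 ≤ β)
    (hbound : ∀ w v : X, ‖a w v‖ ≤ Cb * ‖w‖ * ‖v‖)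
    (hgarding : ∀ v : X, α * ‖v‖ ^ 2 - β * ‖J v‖ ^ 2 ≤ (a v v).re)
    (hadjoint : ∀ (f : H) (v : X), conj (a v (w f)) = inner ℂ (J v) f) (hη : 0 ≤ η)
    (happrox : ∀ f : H, ∀ ε > 0, ∃ vh ∈ Vh, ‖w f - vh‖ ≤ (η + ε) * ‖f‖)
    (hsmall : β * Cb ^ 2 * η ^ 2 ≤ α / 2) {U : X →L[ℂ] X}
    (hU : ∀ g v, a (U g) v = inner ℂ v g) (g : X) :
    α / (4 * Cb ^ 2) * ‖g‖ ^ 2 ≤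
      (inner ℂ ((U + ((3 * β * ‖J ∘L U‖ ^ 2 : ℝ) : ℂ) • Vh.starProjection) g) g).re := by
  set K := ‖J ∘L U‖
  set p := ‖Vh.starProjection g‖
  set q := ‖Vhᗮ.starProjection g‖
  have hpyth : ‖g‖ ^ 2 = p ^ 2 + q ^ 2 := Vh.norm_sq_eq_add_norm_sq_starProjection g
  have hUg : ‖g‖ ≤ Cb * ‖U g‖ := norm_le_of_forall_form_eq_inner hCb.le hbound (hU g)
  have hJ : ‖J (U g)‖ ≤ η * q + K * p := by
    rw [← Vh.starProjection_add_starProjection_orthogonal g, map_add, map_add, add_comm]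
    refine (norm_add_le _ _).trans (add_le_add ?_ ((J ∘L U).le_opNorm _))
    exact norm_apply_le_of_forall_form_eq_inner_of_mem_orthogonal J Vh w hadjoint hη happrox
      (hU _) (Vhᗮ.starProjection_apply_mem g)
  have hgard : α * ‖U g‖ ^ 2 - β * ‖J (U g)‖ ^ 2 ≤ (inner ℂ (U g) g).re := by
    simpa only [hU] using hgarding (U g)
  have hre : (inner ℂ ((U + ((3 * β * K ^ 2 : ℝ) : ℂ) • Vh.starProjection) g) g).re
      = (inner ℂ (U g) g).re + 3 * β * K ^ 2 * p ^ 2 := by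
    rw [add_apply, smul_apply, inner_add_left, inner_smul_left, Complex.add_re,
      Complex.conj_ofReal, Complex.re_ofReal_mul]
    congr 2
    simpa [p] using Vh.re_inner_starProjection_eq_normSq g
  -- `(s + t)² ≤ 3/2 s² + 3 t²`: with the smallness condition, the `Vhᗮ`-part costs at most
  -- `3/4` of the Gårding term, and the `Vh`-part is paid for by the correction `3 β ‖J ∘ U‖²`.
  have hJ2 : ‖J (U g)‖ ^ 2 ≤ 3 / 2 * η ^ 2 * q ^ 2 + 3 * K ^ 2 * p ^ 2 := by
    nlinarith [pow_le_pow_left₀ (norm_nonneg _) hJ 2, sq_nonneg (η * q - 2 * K * p)]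
  have hUg2 : ‖g‖ ^ 2 ≤ Cb ^ 2 * ‖U g‖ ^ 2 := by
    nlinarith [pow_le_pow_left₀ (norm_nonneg _) hUg 2]
  rw [hre, div_mul_eq_mul_div, div_le_iff₀ (by positivity)]
  nlinarith [mul_le_mul_of_nonneg_left hgard (sq_nonneg Cb),
    mul_le_mul_of_nonneg_left hJ2 (mul_nonneg hβ (sq_nonneg Cb)),
    mul_le_mul_of_nonneg_right hsmall (sq_nonneg q), mul_le_mul_of_nonneg_left hUg2 hα,
    mul_nonneg hα (sq_nonneg p)]

theorem eq_zero_of_forall_form_eq_inner_of_mem_orthogonal (J : X →L[ℂ] H)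
    (Vh : Submodule ℂ X) (w : H → X) (hCb : 0 ≤ Cb) (hα : 0 < α) (hβ : 0 ≤ β)
    (hbound : ∀ w v : X, ‖a w v‖ ≤ Cb * ‖w‖ * ‖v‖)
    (hgarding : ∀ v : X, α * ‖v‖ ^ 2 - β * ‖J v‖ ^ 2 ≤ (a v v).re)
    (hadjoint : ∀ (f : H) (v : X), conj (a v (w f)) = inner ℂ (J v) f) (hη : 0 ≤ η)
    (happrox : ∀ f : H, ∀ ε > 0, ∃ vh ∈ Vh, ‖w f - vh‖ ≤ (η + ε) * ‖f‖)
    (hsmall : β * Cb ^ 2 * η ^ 2 ≤ α / 2) {u g : X}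
    (hu : ∀ v, a u v = inner ℂ v g) (huV : u ∈ Vh) (hg : g ∈ Vhᗮ) : u = 0 := by
  have hJ : ‖J u‖ ≤ η * (Cb * ‖u‖) :=
    (norm_apply_le_of_forall_form_eq_inner_of_mem_orthogonal J Vh w hadjoint hη happrox hu
      hg).trans (mul_le_mul_of_nonneg_left (norm_le_of_forall_form_eq_inner hCb hbound hu) hη)
  have hgard : α * ‖u‖ ^ 2 - β * ‖J u‖ ^ 2 ≤ 0 := by
    simpa [hu, Submodule.inner_right_of_mem_orthogonal huV hg] using hgarding u
  have hu2 : ‖u‖ ^ 2 ≤ 0 := by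
    nlinarith [mul_le_mul_of_nonneg_left (pow_le_pow_left₀ (norm_nonneg _) hJ 2) hβ,
      mul_le_mul_of_nonneg_right hsmall (sq_nonneg ‖u‖)]
  simpa using hu2

theorem exists_linearEquiv_forall_form_eq_inner [CompleteSpace X] (J : X →L[ℂ] H)
    (Vh : Submodule ℂ X) [FiniteDimensional ℂ Vh] (w : H → X) (hCb : 0 < Cb) (hα : 0 < α)
    (hβ : 0 ≤ β) (hadd : ∀ w w' v : X, a (w + w') v = a w v + a w' v)
    (hsmul : ∀ (c : ℂ) (w v : X), a (c • w) v = c * a w v)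
    (hbound : ∀ w v : X, ‖a w v‖ ≤ Cb * ‖w‖ * ‖v‖)
    (hgarding : ∀ v : X, α * ‖v‖ ^ 2 - β * ‖J v‖ ^ 2 ≤ (a v v).re)
    (hadjoint : ∀ (f : H) (v : X), conj (a v (w f)) = inner ℂ (J v) f) (hη : 0 ≤ η)
    (happrox : ∀ f : H, ∀ ε > 0, ∃ vh ∈ Vh, ‖w f - vh‖ ≤ (η + ε) * ‖f‖)
    (hsmall : β * Cb ^ 2 * η ^ 2 ≤ α / 2)
    (hcont : ∀ ℓ : X →SL[starRingEnd ℂ] ℂ, ∃! u : X, ∀ v : X, a u v = ℓ v) :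
    ∃ R : X ≃ₗ[ℂ] X, ∀ u v, a u v = inner ℂ v (R u) := by
  obtain ⟨U, hU⟩ := exists_linearMap_forall_form_eq_inner_iff hadd hsmul hcont
  let Uc : X →L[ℂ] X := ⟨U, U.continuous_of_forall_form_eq_inner_iff hadd hsmul hbound hU⟩
  have hUc : ∀ g v, a (Uc g) v = inner ℂ v g := fun g => (hU g _).2 rfl
  have hUinj : Function.Injective Uc := (injective_iff_map_eq_zero _).2 fun g hg => by
    simpa [hg] using norm_le_of_forall_form_eq_inner hCb.le hbound (hUc g)
  set c : ℝ := 3 * β * ‖J ∘L Uc‖ ^ 2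
  have hcoer : IsUnit (Uc + (c : ℂ) • Vh.starProjection) :=
    ContinuousLinearMap.isUnit_of_forall_le_norm_inner_map _
      (c := ⟨α / (4 * Cb ^ 2), by positivity⟩)
      (NNReal.coe_pos.1 (by positivity : (0 : ℝ) < α / (4 * Cb ^ 2))) fun g => by
        rw [mul_comm]
        exact (le_re_inner_add_smul_starProjection J Vh w hCb hα.le hβ hbound hgarding hadjoint
          hη happrox hsmall hUc g).trans (Complex.re_le_norm _)
  have hcpt : IsCompactOperator (Uc + (c : ℂ) • Vh.starProjection - Uc) := by
    rw [add_sub_cancel_left]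
    exact ((isCompactOperator_of_locallyCompactSpace_dom Vh.orthogonalProjectionOnto).clm_comp
      Vh.subtypeL).smul (c : ℂ)
  have hbij := ContinuousLinearMap.isUnit_iff_bijective.1
    (ContinuousLinearMap.isUnit_of_injective_of_isCompactOperator_sub hcoer hcpt hUinj)
  refine ⟨(LinearEquiv.ofBijective (Uc : X →ₗ[ℂ] X) hbij).symm, fun u v => ?_⟩
  conv_lhs => rw [← (LinearEquiv.ofBijective (Uc : X →ₗ[ℂ] X) hbij).apply_symm_apply u]
  exact hUc _ v

theorem existsUnique_galerkin_of_forall_form_eq_inner (Vh : Submodule ℂ X)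
    [FiniteDimensional ℂ Vh] (R : X →ₗ[ℂ] X) (hR : ∀ u v, a u v = inner ℂ v (R u))
    (hVh : ∀ u ∈ Vh, R u ∈ Vhᗮ → u = 0) (r : X) :
    ∃! uh : Vh, ∀ vh : Vh, a uh vh = inner ℂ (vh : X) r := by
  let Φ : Vh →ₗ[ℂ] Vh := Vh.orthogonalProjectionOnto.toLinearMap ∘ₗ R ∘ₗ Vh.subtype
  have hΦ : Function.Injective Φ := (injective_iff_map_eq_zero Φ).2 fun uh huh =>
    Subtype.ext (hVh uh uh.2 (Vh.orthogonalProjectionOnto_eq_zero_iff.1 huh))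
  have key (uh : Vh) : (∀ vh : Vh, a uh vh = inner ℂ (vh : X) r) ↔
      Φ uh = Vh.orthogonalProjectionOnto r := by
    refine ⟨fun h => ext_inner_left ℂ fun vh => ?_, fun h vh => ?_⟩
    · simpa [Φ, hR] using h vh
    · simpa [Φ, hR] using congrArg (inner ℂ vh) h
  exact (existsUnique_congr key).2
    (Function.Bijective.existsUnique ⟨hΦ, LinearMap.injective_iff_surjective.1 hΦ⟩ _)

end Form

theorem stmt_3_general {X H : Type*}
    [NormedAddCommGroup X] [InnerProductSpace ℂ X] [CompleteSpace X]
    [NormedAddCommGroup H] [InnerProductSpace ℂ H]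
    (J : X →L[ℂ] H)
    (a : X → X → ℂ) (Cb α β : ℝ) (hCb : 0 < Cb) (hα : 0 < α) (hβ : 0 ≤ β)
    (hadd : ∀ w w' v : X, a (w + w') v = a w v + a w' v)
    (hsmul : ∀ (c : ℂ) (w v : X), a (c • w) v = c * a w v)
    (hbound : ∀ w v : X, ‖a w v‖ ≤ Cb * ‖w‖ * ‖v‖)
    (hgarding : ∀ v : X, α * ‖v‖ ^ 2 - β * ‖J v‖ ^ 2 ≤ (a v v).re)
    (Vh : Submodule ℂ X) [FiniteDimensional ℂ Vh]
    (w : H → X)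
    (hadjoint : ∀ (f : H) (v : X), conj (a v (w f)) = inner ℂ (J v) f)
    (η : ℝ) (hη : 0 ≤ η)
    (happrox : ∀ f : H, ∀ ε > 0, ∃ vh ∈ Vh, ‖w f - vh‖ ≤ (η + ε) * ‖f‖)
    (hsmall : β * Cb ^ 2 * η ^ 2 ≤ α / 2)
    (hcont : ∀ ℓ : X →SL[starRingEnd ℂ] ℂ, ∃! u : X, ∀ v : X, a u v = ℓ v) :
    ∀ ℓ : X →SL[starRingEnd ℂ] ℂ,
      ∃! uh : Vh, ∀ vh : Vh, a (uh : X) (vh : X) = ℓ (vh : X) := by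
  obtain ⟨R, hR⟩ := exists_linearEquiv_forall_form_eq_inner J Vh w hCb hα hβ hadd hsmul hbound
    hgarding hadjoint hη happrox hsmall hcont
  intro ℓ
  obtain ⟨u, hu, -⟩ := hcont ℓ
  have hℓ : ∀ v, ℓ v = inner ℂ v (R u) := fun v => (hu v).symm.trans (hR u v)
  simp only [hℓ]
  exact existsUnique_galerkin_of_forall_form_eq_inner Vh R hR (fun uh huh hRuh =>
    eq_zero_of_forall_form_eq_inner_of_mem_orthogonal J Vh w hCb.le hα hβ hbound hgarding hadjoint
      hη happrox hsmall (hR uh) huh hRuh) (R u)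

/-- unique solvability of the finite-dimensional Galerkin problem under
the Schatz-type smallness condition.  Setting as in the abstract Schatz argument:
`X ⊂ H` complex Hilbert spaces with continuous embedding `J`, `a` a continuous
sesquilinear form with Gårding inequality (constants `α`, `β`), all adjoint problems
with right-hand sides `f ∈ H` uniquely solvable with solution `w f`, and the adjoint
approximation quantity `η` satisfying `β Cb² η² ≤ α/2`.  If the continuous problem
`a(u,v) = ℓ(v)` is uniquely solvable for every antilinear continuous functional `ℓ`,
then so is the discrete problem `a(u_h, v_h) = ℓ(v_h)` for all `v_h ∈ Vh`. -/
theorem stmt_3 {X H : Type*}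
    [NormedAddCommGroup X] [InnerProductSpace ℂ X] [CompleteSpace X]
    [NormedAddCommGroup H] [InnerProductSpace ℂ H] [CompleteSpace H]
    (J : X →L[ℂ] H)
    (a : X → X → ℂ) (Cb α β : ℝ) (hCb : 0 < Cb) (hα : 0 < α) (hβ : 0 ≤ β)
    (hadd : ∀ w w' v : X, a (w + w') v = a w v + a w' v)
    (hsmul : ∀ (c : ℂ) (w v : X), a (c • w) v = c * a w v)
    (hbound : ∀ w v : X, ‖a w v‖ ≤ Cb * ‖w‖ * ‖v‖)
    (hgarding : ∀ v : X, α * ‖v‖ ^ 2 - β * ‖J v‖ ^ 2 ≤ (a v v).re)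
    (Vh : Submodule ℂ X) [FiniteDimensional ℂ Vh]
    (w : H → X)
    (hadjoint : ∀ (f : H) (v : X), conj (a v (w f)) = inner ℂ (J v) f)
    (η : ℝ) (hη : 0 ≤ η)
    (happrox : ∀ f : H, ∀ ε > 0, ∃ vh ∈ Vh, ‖w f - vh‖ ≤ (η + ε) * ‖f‖)
    (hsmall : β * Cb ^ 2 * η ^ 2 ≤ α / 2)
    (hcont : ∀ ℓ : X →SL[starRingEnd ℂ] ℂ, ∃! u : X, ∀ v : X, a u v = ℓ v) :
    ∀ ℓ : X →SL[starRingEnd ℂ] ℂ,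
      ∃! uh : Vh, ∀ vh : Vh, a (uh : X) (vh : X) = ℓ (vh : X) :=
  stmt_3_general J a Cb α β hCb hα hβ hadd hsmul hbound hgarding Vh w hadjoint η hη happrox hsmall
    hcont
end

section
/- Suppose for each n ∈ ℤ the symbol Z_n(κR) satisfies |Z_n(κR)|² ≤ (1+|κR|²)(1+n²). Then for all s ≥ 1/2, w ∈ H^s(S_R) and v ∈ H^{1/2}(S_R) (with S_R ⊂ ℝ² the circle of radius R), the DtN truncation error satisfies |((T_κ − T_{κ,N})w, v)_{S_R}| ≤ (1+|κR|²)^{1/2} R^{−1} (1+N²)^{−(2s−1)/4} ‖w‖_{H^s(S_R)} ‖v‖_{H^{1/2}(S_R)}. -/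
/-!
On the tail `|n| > N` the symbol bound gives `|Z_n| ≤ √(1+|κR|²) (1+n²)^{1/2}`, and
`(1+n²)^{1/2} = (1+n²)^{s/2} (1+n²)^{1/4} (1+n²)^{-(2s-1)/4}` with the last factor at most
`(1+N²)^{-(2s-1)/4}` because `s ≥ 1/2`. Cauchy–Schwarz on the tail then bounds the pairing by
the weighted ℓ² norms of `w` and `v`, i.e. by the `H^s` and `H^{1/2}` norms; the factor `R`
they carry cancels the `R⁻¹`.
-/

open ComplexConjugate

theorem summable_and_tsum_sqrt_mul_sqrt_le {ι : Type*} {f g : ι → ℝ} (hf₀ : ∀ i, 0 ≤ f i)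
    (hg₀ : ∀ i, 0 ≤ g i) (hf : Summable f) (hg : Summable g) :
    (Summable fun i => √(f i) * √(g i)) ∧
      ∑' i, √(f i) * √(g i) ≤ √(∑' i, f i) * √(∑' i, g i) := by
  have hsq : ∀ {h : ι → ℝ}, (∀ i, 0 ≤ h i) → (fun i => √(h i) ^ (2 : ℝ)) = h := fun h₀ =>
    funext fun i => by rw [Real.rpow_two, Real.sq_sqrt (h₀ i)]
  have := Real.summable_and_inner_le_Lp_mul_Lq_tsum_of_nonneg Real.HolderConjugate.two_two
    (fun i => Real.sqrt_nonneg (f i)) (fun i => Real.sqrt_nonneg (g i))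
    (by rwa [hsq hf₀]) (by rwa [hsq hg₀])
  rwa [hsq hf₀, hsq hg₀, ← Real.sqrt_eq_rpow, ← Real.sqrt_eq_rpow] at this

theorem sqrt_le_sqrt_rpow_mul_sqrt_rpow_div {t T s : ℝ} (hT : 0 < T) (hTt : T ≤ t)
    (hs : 1 / 2 ≤ s) :
    √t ≤ √(t ^ s) * √(t ^ (1 / 2 : ℝ)) / T ^ ((2 * s - 1) / 4) := by
  have ht : 0 < t := hT.trans_le hTt
  have hsplit : √(t ^ s) * √(t ^ (1 / 2 : ℝ)) = √t * t ^ ((2 * s - 1) / 4) := by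
    rw [← Real.sqrt_mul (by positivity), ← Real.rpow_add ht, Real.sqrt_eq_rpow,
      Real.sqrt_eq_rpow, ← Real.rpow_mul ht.le, ← Real.rpow_add ht]
    ring_nf
  rw [hsplit, le_div_iff₀ (by positivity)]
  gcongr
  linarith

theorem norm_mul_mul_conj_le {z a b : ℂ} {c t T s : ℝ} (hz : ‖z‖ ^ 2 ≤ c * t) (hT : 0 < T)
    (hTt : T ≤ t) (hs : 1 / 2 ≤ s) :
    ‖z * a * conj b‖ ≤
      √c / T ^ ((2 * s - 1) / 4) * (√(t ^ s * ‖a‖ ^ 2) * √(t ^ (1 / 2 : ℝ) * ‖b‖ ^ 2)) := by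
  have ht : 0 ≤ t := hT.le.trans hTt
  have hz' : ‖z‖ ≤ √c * √t := by
    rw [← Real.sqrt_mul' c ht]
    exact Real.le_sqrt_of_sq_le hz
  have hweight := sqrt_le_sqrt_rpow_mul_sqrt_rpow_div hT hTt hs
  rw [Real.sqrt_mul' _ (sq_nonneg _), Real.sqrt_mul' _ (sq_nonneg _),
    Real.sqrt_sq (norm_nonneg a), Real.sqrt_sq (norm_nonneg b), norm_mul, norm_mul,
    Complex.norm_conj]
  calc ‖z‖ * ‖a‖ * ‖b‖ ≤ √c * √t * ‖a‖ * ‖b‖ := by gcongr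
    _ ≤ √c * (√(t ^ s) * √(t ^ (1 / 2 : ℝ)) / T ^ ((2 * s - 1) / 4)) * ‖a‖ * ‖b‖ := by
        gcongr
    _ = _ := by ring

/-- The pairing `((T_κ − T_{κ,N})w, v)_{S_R}` is `Σ_{|n|>N} Z_n(κR) w_n conj(v_n)` in terms of the
Fourier coefficients: the factor `R` of the L² pairing on `S_R` cancels the `R⁻¹` of `T_κ`. -/
theorem stmt_12 (R κ : ℝ) (hR : 0 < R) (s : ℝ) (hs : 1 / 2 ≤ s) (N : ℕ)
    (Z : ℤ → ℂ)
    (hZ : ∀ n : ℤ, ‖Z n‖ ^ 2 ≤ (1 + |κ * R| ^ 2) * (1 + (n : ℝ) ^ 2))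
    (w v : ℤ → ℂ)
    (hw : Summable (fun n : ℤ => (1 + (n : ℝ) ^ 2) ^ s * ‖w n‖ ^ 2))
    (hv : Summable (fun n : ℤ => (1 + (n : ℝ) ^ 2) ^ ((1 : ℝ) / 2) * ‖v n‖ ^ 2)) :
    ‖∑' n : {n : ℤ // (N : ℤ) < |n|}, Z (n : ℤ) * w (n : ℤ) * conj (v (n : ℤ))‖
      ≤ Real.sqrt (1 + |κ * R| ^ 2) / R / (1 + (N : ℝ) ^ 2) ^ ((2 * s - 1) / 4)
        * Real.sqrt (R * ∑' n : ℤ, (1 + (n : ℝ) ^ 2) ^ s * ‖w n‖ ^ 2)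
        * Real.sqrt (R * ∑' n : ℤ, (1 + (n : ℝ) ^ 2) ^ ((1 : ℝ) / 2) * ‖v n‖ ^ 2) := by
  set S : Set ℤ := {n : ℤ | (N : ℤ) < |n|}
  set K := √(1 + |κ * R| ^ 2) / (1 + (N : ℝ) ^ 2) ^ ((2 * s - 1) / 4)
  set fw := fun n : ℤ => (1 + (n : ℝ) ^ 2) ^ s * ‖w n‖ ^ 2
  set fv := fun n : ℤ => (1 + (n : ℝ) ^ 2) ^ ((1 : ℝ) / 2) * ‖v n‖ ^ 2
  have hfw₀ : ∀ n, 0 ≤ fw n := fun n => by positivity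
  have hfv₀ : ∀ n, 0 ≤ fv n := fun n => by positivity
  have hterm : ∀ n : S, ‖Z n * w n * conj (v n)‖ ≤ K * (√(fw n) * √(fv n)) := by
    rintro ⟨n, hn⟩
    have hNn : (N : ℝ) ^ 2 ≤ (n : ℝ) ^ 2 := by
      rw [sq_le_sq, Nat.abs_cast]
      exact_mod_cast hn.le
    exact norm_mul_mul_conj_le (hZ n) (by positivity) (by linarith) hs
  obtain ⟨hsum, hCS⟩ := summable_and_tsum_sqrt_mul_sqrt_le (fun n : S => hfw₀ n)
    (fun n : S => hfv₀ n) (hw.subtype S) (hv.subtype S)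
  have hnorm : Summable fun n : S => ‖Z n * w n * conj (v n)‖ :=
    (hsum.mul_left K).of_nonneg_of_le (fun _ => norm_nonneg _) hterm
  calc ‖∑' n : S, Z n * w n * conj (v n)‖
      ≤ ∑' n : S, ‖Z n * w n * conj (v n)‖ := norm_tsum_le_tsum_norm hnorm
    _ ≤ ∑' n : S, K * (√(fw n) * √(fv n)) := hnorm.tsum_le_tsum hterm (hsum.mul_left K)
    _ = K * ∑' n : S, √(fw n) * √(fv n) := tsum_mul_left
    _ ≤ K * (√(∑' n : S, fw n) * √(∑' n : S, fv n)) := by gcongr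
    _ ≤ K * (√(∑' n, fw n) * √(∑' n, fv n)) := by
        gcongr
        exacts [hw.tsum_subtype_le fw S hfw₀, hv.tsum_subtype_le fv S hfv₀]
    _ = _ := by
        rw [Real.sqrt_mul hR.le, Real.sqrt_mul hR.le]
        simp only [K]
        field_simp
        rw [Real.sq_sqrt hR.le]
        ring
end

section
/- Suppose for each n ∈ ℕ₀ the spherical DtN symbol satisfies |z_n(κR)|² ≤ (2+|κR|²)(1+n²). Then for all s ≥ 1/2, w ∈ H^s(S_R) and v ∈ H^{1/2}(S_R) (with S_R ⊂ ℝ³ the sphere of radius R), |((T_κ − T_{κ,N})w, v)_{S_R}| ≤ (2+|κR|²)^{1/2} R^{−1} (1+N²)^{−(2s−1)/4} ‖w‖_{H^s(S_R)} ‖v‖_{H^{1/2}(S_R)}. -/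
open ComplexConjugate

/-- Cauchy–Schwarz for tsums: summability of the product. -/
lemma aux_summable_mul {ι : Type*} {f g : ι → ℝ} (hf : ∀ i, 0 ≤ f i) (hg : ∀ i, 0 ≤ g i)
    (hf2 : Summable fun i => f i ^ 2) (hg2 : Summable fun i => g i ^ 2) :
    Summable fun i => f i * g i := by
  refine Summable.of_nonneg_of_le (fun i => mul_nonneg (hf i) (hg i))
    (fun i => ?_) ((hf2.add hg2).div_const 2)
  nlinarith [sq_nonneg (f i - g i)]

/-- Cauchy–Schwarz for tsums. -/
lemma aux_tsum_mul_le {ι : Type*} {f g : ι → ℝ} (hf : ∀ i, 0 ≤ f i) (hg : ∀ i, 0 ≤ g i)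
    (hf2 : Summable fun i => f i ^ 2) (hg2 : Summable fun i => g i ^ 2) :
    ∑' i, f i * g i ≤ Real.sqrt (∑' i, f i ^ 2) * Real.sqrt (∑' i, g i ^ 2) := by
  refine Summable.tsum_le_of_sum_le (aux_summable_mul hf hg hf2 hg2) (fun F => ?_)
  calc ∑ i ∈ F, f i * g i
      ≤ Real.sqrt (∑ i ∈ F, f i ^ 2) * Real.sqrt (∑ i ∈ F, g i ^ 2) :=
        Real.sum_mul_le_sqrt_mul_sqrt F f g
    _ ≤ Real.sqrt (∑' i, f i ^ 2) * Real.sqrt (∑' i, g i ^ 2) := by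
        gcongr
        · exact Summable.sum_le_tsum F (fun i _ => sq_nonneg _) hf2
        · exact Summable.sum_le_tsum F (fun i _ => sq_nonneg _) hg2

/-- truncation error estimate for the three-dimensional DtN operator in
the spherical-harmonic Fourier scale.  Functions on the sphere `S_R ⊂ ℝ³` are
represented by their Fourier coefficient arrays `w v : ℕ → ℤ → ℂ` (`v n m = v_n^m`,
relevant for `|m| ≤ n`); the Sobolev norm is
`‖v‖²_{H^s} = R² Σ_{n≥0} Σ_{|m|≤n} (1+n²)^s |v_n^m|²` and the pairing is
`((T_κ − T_{κ,N})w, v)_{S_R} = R Σ_{n>N} Σ_{|m|≤n} z_n(κR) w_n^m conj(v_n^m)`.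
Under the symbol bound `|z_n(κR)|² ≤ (2+|κR|²)(1+n²)` one has, for `s ≥ 1/2`,
`|((T_κ − T_{κ,N})w, v)| ≤ (2+|κR|²)^{1/2} R⁻¹ (1+N²)^{−(2s−1)/4}‖w‖_{H^s}‖v‖_{H^{1/2}}`. -/
theorem stmt_13 (R κ : ℝ) (hR : 0 < R) (s : ℝ) (hs : 1 / 2 ≤ s) (N : ℕ)
    (z : ℕ → ℂ)
    (hz : ∀ n : ℕ, ‖z n‖ ^ 2 ≤ (2 + |κ * R| ^ 2) * (1 + (n : ℝ) ^ 2))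
    (w v : ℕ → ℤ → ℂ)
    (hw : Summable (fun p : {p : ℕ × ℤ // p.2.natAbs ≤ p.1} =>
      (1 + ((p : ℕ × ℤ).1 : ℝ) ^ 2) ^ s * ‖w (p : ℕ × ℤ).1 (p : ℕ × ℤ).2‖ ^ 2))
    (hv : Summable (fun p : {p : ℕ × ℤ // p.2.natAbs ≤ p.1} =>
      (1 + ((p : ℕ × ℤ).1 : ℝ) ^ 2) ^ ((1 : ℝ) / 2) * ‖v (p : ℕ × ℤ).1 (p : ℕ × ℤ).2‖ ^ 2)) :
    ‖R * ∑' p : {p : ℕ × ℤ // N < p.1 ∧ p.2.natAbs ≤ p.1},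
        z (p : ℕ × ℤ).1 * w (p : ℕ × ℤ).1 (p : ℕ × ℤ).2 * conj (v (p : ℕ × ℤ).1 (p : ℕ × ℤ).2)‖
      ≤ Real.sqrt (2 + |κ * R| ^ 2) / R / (1 + (N : ℝ) ^ 2) ^ ((2 * s - 1) / 4)
        * Real.sqrt (R ^ 2 * ∑' p : {p : ℕ × ℤ // p.2.natAbs ≤ p.1},
            (1 + ((p : ℕ × ℤ).1 : ℝ) ^ 2) ^ s * ‖w (p : ℕ × ℤ).1 (p : ℕ × ℤ).2‖ ^ 2)
        * Real.sqrt (R ^ 2 * ∑' p : {p : ℕ × ℤ // p.2.natAbs ≤ p.1},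
            (1 + ((p : ℕ × ℤ).1 : ℝ) ^ 2) ^ ((1 : ℝ) / 2) * ‖v (p : ℕ × ℤ).1 (p : ℕ × ℤ).2‖ ^ 2) := by
  classical
  set C : ℝ := 2 + |κ * R| ^ 2 with hC
  have hC0 : 0 < C := by positivity
  set S := {p : ℕ × ℤ // p.2.natAbs ≤ p.1}
  set T := {p : ℕ × ℤ // N < p.1 ∧ p.2.natAbs ≤ p.1}
  -- the inclusion
  let ι : T → S := fun q => ⟨q.1, q.2.2⟩
  have hι : Function.Injective ι := by
    intro x y hxy
    apply Subtype.ext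
    have h := congrArg Subtype.val hxy
    simpa [ι] using h
  have hpos : ∀ n : ℕ, (0 : ℝ) < 1 + (n : ℝ) ^ 2 := fun n => by positivity
  -- the half-norm sequences on T
  set a : T → ℝ := fun q => (1 + ((q : ℕ × ℤ).1 : ℝ) ^ 2) ^ (s / 2) *
    ‖w (q : ℕ × ℤ).1 (q : ℕ × ℤ).2‖ with ha
  set b : T → ℝ := fun q => (1 + ((q : ℕ × ℤ).1 : ℝ) ^ 2) ^ ((1 : ℝ) / 4) *
    ‖v (q : ℕ × ℤ).1 (q : ℕ × ℤ).2‖ with hb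
  have ha0 : ∀ q, 0 ≤ a q := fun q =>
    mul_nonneg (Real.rpow_nonneg (hpos _).le _) (norm_nonneg _)
  have hb0 : ∀ q, 0 ≤ b q := fun q =>
    mul_nonneg (Real.rpow_nonneg (hpos _).le _) (norm_nonneg _)
  have ha2 : ∀ q : T, a q ^ 2 = (1 + ((q : ℕ × ℤ).1 : ℝ) ^ 2) ^ s *
      ‖w (q : ℕ × ℤ).1 (q : ℕ × ℤ).2‖ ^ 2 := by
    intro q
    rw [ha]
    rw [mul_pow, ← Real.rpow_natCast ((1 + ((q : ℕ × ℤ).1 : ℝ) ^ 2) ^ (s / 2)) 2,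
      ← Real.rpow_mul (hpos _).le]
    norm_num
  have hb2 : ∀ q : T, b q ^ 2 = (1 + ((q : ℕ × ℤ).1 : ℝ) ^ 2) ^ ((1 : ℝ) / 2) *
      ‖v (q : ℕ × ℤ).1 (q : ℕ × ℤ).2‖ ^ 2 := by
    intro q
    rw [hb]
    rw [mul_pow, ← Real.rpow_natCast ((1 + ((q : ℕ × ℤ).1 : ℝ) ^ 2) ^ ((1 : ℝ) / 4)) 2,
      ← Real.rpow_mul (hpos _).le]
    norm_num
  -- summability of the squares on T, via the injection
  have hwT : Summable fun q : T => a q ^ 2 :=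
    (hw.comp_injective hι).congr fun q => (ha2 q).symm
  have hvT : Summable fun q : T => b q ^ 2 :=
    (hv.comp_injective hι).congr fun q => (hb2 q).symm
  -- the constant
  set K : ℝ := Real.sqrt C * (1 + (N : ℝ) ^ 2) ^ (-((2 * s - 1) / 4)) with hK
  have hK0 : 0 ≤ K := mul_nonneg (Real.sqrt_nonneg _) (Real.rpow_nonneg (hpos N).le _)
  -- the summand
  set g : T → ℂ := fun q => z (q : ℕ × ℤ).1 * w (q : ℕ × ℤ).1 (q : ℕ × ℤ).2 *
    conj (v (q : ℕ × ℤ).1 (q : ℕ × ℤ).2) with hg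
  -- key pointwise bound
  have key : ∀ q : T, ‖g q‖ ≤ K * (a q * b q) := by
    rintro ⟨⟨n, m⟩, hn, hm⟩
    have hx := hpos n
    simp only [hg, ha, hb, norm_mul, RCLike.norm_conj]
    have hzn : ‖z n‖ ≤ Real.sqrt C * Real.sqrt (1 + (n : ℝ) ^ 2) := by
      rw [← Real.sqrt_mul hC0.le]
      exact (Real.le_sqrt (norm_nonneg _) (by positivity)).2 (hz n)
    have hsplit : Real.sqrt (1 + (n : ℝ) ^ 2) =
        (1 + (n : ℝ) ^ 2) ^ ((1 - 2 * s) / 4) *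
        ((1 + (n : ℝ) ^ 2) ^ (s / 2) * (1 + (n : ℝ) ^ 2) ^ ((1 : ℝ) / 4)) := by
      rw [Real.sqrt_eq_rpow, show (1 : ℝ) / 2 = (1 - 2 * s) / 4 + (s / 2 + 1 / 4) by ring,
        Real.rpow_add hx, Real.rpow_add hx]
    have hdecay : (1 + (n : ℝ) ^ 2) ^ ((1 - 2 * s) / 4) ≤
        (1 + (N : ℝ) ^ 2) ^ (-((2 * s - 1) / 4)) := by
      rw [show -((2 * s - 1) / 4) = (1 - 2 * s) / 4 by ring]
      have hNn : (1 : ℝ) + (N : ℝ) ^ 2 ≤ 1 + (n : ℝ) ^ 2 := by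
        have h1 : (N : ℝ) ≤ (n : ℝ) := Nat.cast_le.2 hn.le
        have h2 : (0 : ℝ) ≤ (N : ℝ) := Nat.cast_nonneg N
        nlinarith
      exact Real.rpow_le_rpow_of_nonpos (hpos N) hNn (by linarith)
    calc ‖z n‖ * ‖w n m‖ * ‖v n m‖
        ≤ Real.sqrt C * Real.sqrt (1 + (n : ℝ) ^ 2) * ‖w n m‖ * ‖v n m‖ := by
          gcongr
      _ = Real.sqrt C * (1 + (n : ℝ) ^ 2) ^ ((1 - 2 * s) / 4) *
          ((1 + (n : ℝ) ^ 2) ^ (s / 2) * ‖w n m‖ *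
            ((1 + (n : ℝ) ^ 2) ^ ((1 : ℝ) / 4) * ‖v n m‖)) := by
          rw [hsplit]; ring
      _ ≤ Real.sqrt C * (1 + (N : ℝ) ^ 2) ^ (-((2 * s - 1) / 4)) *
          ((1 + (n : ℝ) ^ 2) ^ (s / 2) * ‖w n m‖ *
            ((1 + (n : ℝ) ^ 2) ^ ((1 : ℝ) / 4) * ‖v n m‖)) := by
          have hnn : 0 ≤ (1 + (n : ℝ) ^ 2) ^ (s / 2) * ‖w n m‖ *
              ((1 + (n : ℝ) ^ 2) ^ ((1 : ℝ) / 4) * ‖v n m‖) := by positivity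
          exact mul_le_mul_of_nonneg_right
            (mul_le_mul_of_nonneg_left hdecay (Real.sqrt_nonneg _)) hnn
  -- summability chains
  have hab : Summable fun q : T => a q * b q := aux_summable_mul ha0 hb0 hwT hvT
  have habK : Summable fun q : T => K * (a q * b q) := hab.mul_left K
  have hgsum : Summable fun q : T => ‖g q‖ :=
    Summable.of_nonneg_of_le (fun q => norm_nonneg _) key habK
  -- the bounds on tsums
  have h1 : ‖∑' q : T, g q‖ ≤ ∑' q : T, ‖g q‖ := norm_tsum_le_tsum_norm hgsum
  have h2 : ∑' q : T, ‖g q‖ ≤ K * ∑' q : T, a q * b q := by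
    calc ∑' q : T, ‖g q‖ ≤ ∑' q : T, K * (a q * b q) := Summable.tsum_le_tsum key hgsum habK
      _ = K * ∑' q : T, a q * b q := tsum_mul_left
  have h3 : ∑' q : T, a q * b q ≤
      Real.sqrt (∑' q : T, a q ^ 2) * Real.sqrt (∑' q : T, b q ^ 2) :=
    aux_tsum_mul_le ha0 hb0 hwT hvT
  have h4 : ∑' q : T, a q ^ 2 ≤ ∑' p : S,
      (1 + ((p : ℕ × ℤ).1 : ℝ) ^ 2) ^ s * ‖w (p : ℕ × ℤ).1 (p : ℕ × ℤ).2‖ ^ 2 := by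
    refine Summable.tsum_le_tsum_of_inj ι hι (fun p _ => by positivity) (fun q => ?_) hwT hw
    exact le_of_eq (ha2 q)
  have h5 : ∑' q : T, b q ^ 2 ≤ ∑' p : S,
      (1 + ((p : ℕ × ℤ).1 : ℝ) ^ 2) ^ ((1 : ℝ) / 2) *
        ‖v (p : ℕ × ℤ).1 (p : ℕ × ℤ).2‖ ^ 2 := by
    refine Summable.tsum_le_tsum_of_inj ι hι (fun p _ => by positivity) (fun q => ?_) hvT hv
    exact le_of_eq (hb2 q)
  -- abbreviations for the full sums
  set W : ℝ := ∑' p : S,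
    (1 + ((p : ℕ × ℤ).1 : ℝ) ^ 2) ^ s * ‖w (p : ℕ × ℤ).1 (p : ℕ × ℤ).2‖ ^ 2 with hW
  set V : ℝ := ∑' p : S,
    (1 + ((p : ℕ × ℤ).1 : ℝ) ^ 2) ^ ((1 : ℝ) / 2) *
      ‖v (p : ℕ × ℤ).1 (p : ℕ × ℤ).2‖ ^ 2 with hV
  have hsqW : Real.sqrt (R ^ 2 * W) = R * Real.sqrt W := by
    rw [Real.sqrt_mul (sq_nonneg R), Real.sqrt_sq hR.le]
  have hsqV : Real.sqrt (R ^ 2 * V) = R * Real.sqrt V := by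
    rw [Real.sqrt_mul (sq_nonneg R), Real.sqrt_sq hR.le]
  -- final chain
  have main : ‖∑' q : T, g q‖ ≤ K * (Real.sqrt W * Real.sqrt V) := by
    refine h1.trans (h2.trans ?_)
    have h6 : Real.sqrt (∑' q : T, a q ^ 2) * Real.sqrt (∑' q : T, b q ^ 2) ≤
        Real.sqrt W * Real.sqrt V := by
      exact mul_le_mul (Real.sqrt_le_sqrt h4) (Real.sqrt_le_sqrt h5)
        (Real.sqrt_nonneg _) (Real.sqrt_nonneg _)
    exact mul_le_mul_of_nonneg_left (h3.trans h6) hK0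
  have hKeq : K = Real.sqrt C / (1 + (N : ℝ) ^ 2) ^ ((2 * s - 1) / 4) := by
    rw [hK, Real.rpow_neg (hpos N).le]
    exact (div_eq_mul_inv _ _).symm
  have hD : (1 + (N : ℝ) ^ 2) ^ ((2 * s - 1) / 4) ≠ 0 :=
    (Real.rpow_pos_of_pos (hpos N) _).ne'
  rw [hsqW, hsqV]
  calc ‖(R : ℂ) * tsum g‖ = R * ‖tsum g‖ := by
        rw [norm_mul, Complex.norm_real, Real.norm_eq_abs, abs_of_pos hR]
    _ ≤ R * (K * (Real.sqrt W * Real.sqrt V)) := mul_le_mul_of_nonneg_left main hR.le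
    _ = Real.sqrt C / R / (1 + (N : ℝ) ^ 2) ^ ((2 * s - 1) / 4) *
        (R * Real.sqrt W) * (R * Real.sqrt V) := by
        rw [hKeq]
        field_simp
end
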